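/- arXiv:math/0305160 — 2 statements merged into one kernel-verified Lean document; each statement's English description precedes it below -/
import Mathlib

section
/- With the causal-state statistic ε defined by grouping values of X with identical conditional distributions of Y, the variables X and Y are conditionally independent given ε(X). -/
open scoped Classical BigOperators

/-- Probability of an event under weights `P` on a finite sample space. -/
noncomputable def pr {Ω : Type} [Fintype Ω] (P : Ω → ℝ) (E : Ω → Prop) : ℝ :=
  ∑ ω, if E ω then P ω else 0

/-- Conditional probability `P(E | F)`. -/
noncomputable def cpr {Ω : Type} [Fintype Ω] (P : Ω → ℝ) (E F : Ω → Prop) : ℝ :=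
  pr P (fun ω => E ω ∧ F ω) / pr P F

/-- Shannon mutual information (base 2), with the convention `0 log 0 = 0`. -/
noncomputable def mi {Ω A B : Type} [Fintype Ω] [Fintype A] [Fintype B]
    (P : Ω → ℝ) (X : Ω → A) (Y : Ω → B) : ℝ :=
  ∑ a, ∑ b,
    (if pr P (fun ω => X ω = a ∧ Y ω = b) = 0 then 0 else
      pr P (fun ω => X ω = a ∧ Y ω = b) *
        Real.logb 2 (pr P (fun ω => X ω = a ∧ Y ω = b) /
          (pr P (fun ω => X ω = a) * pr P (fun ω => Y ω = b))))

/-- Conditional mutual information `I[X;Y|Z]` (base 2), convention `0 log 0 = 0`. -/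
noncomputable def cmi {Ω A B C : Type} [Fintype Ω] [Fintype A] [Fintype B] [Fintype C]
    (P : Ω → ℝ) (X : Ω → A) (Y : Ω → B) (Z : Ω → C) : ℝ :=
  ∑ c, ∑ a, ∑ b,
    (if pr P (fun ω => X ω = a ∧ Y ω = b ∧ Z ω = c) = 0 then 0 else
      pr P (fun ω => X ω = a ∧ Y ω = b ∧ Z ω = c) *
        Real.logb 2 ((pr P (fun ω => X ω = a ∧ Y ω = b ∧ Z ω = c) *
            pr P (fun ω => Z ω = c)) /
          (pr P (fun ω => X ω = a ∧ Z ω = c) * pr P (fun ω => Y ω = b ∧ Z ω = c))))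

/-- Conditional independence `X ⫫ Y | Z`: the conditional joint factorizes for
every conditioning value of positive probability. -/
def CondIndep {Ω A B C : Type} [Fintype Ω]
    (P : Ω → ℝ) (X : Ω → A) (Y : Ω → B) (Z : Ω → C) : Prop :=
  ∀ (a : A) (b : B) (c : C), 0 < pr P (fun ω => Z ω = c) →
    cpr P (fun ω => X ω = a ∧ Y ω = b) (fun ω => Z ω = c) =
      cpr P (fun ω => X ω = a) (fun ω => Z ω = c) *
        cpr P (fun ω => Y ω = b) (fun ω => Z ω = c)

/-- The causal-state statistic: `eps P X Y x` is the conditional distribution of `Y`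
given `X = x`; two values of `X` are equivalent iff their `eps`-values coincide. -/
noncomputable def eps {Ω A B : Type} [Fintype Ω]
    (P : Ω → ℝ) (X : Ω → A) (Y : Ω → B) (x : A) : B → ℝ :=
  fun y => cpr P (fun ω => Y ω = y) (fun ω => X ω = x)

lemma pr_congr {Ω : Type} [Fintype Ω] (P : Ω → ℝ) {E F : Ω → Prop}
    (h : ∀ ω, E ω ↔ F ω) : pr P E = pr P F := by
  unfold pr; exact Finset.sum_congr rfl fun ω _ => by simp [h ω]

lemma pr_zero_of_empty {Ω : Type} [Fintype Ω] (P : Ω → ℝ) {E : Ω → Prop}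
    (h : ∀ ω, ¬ E ω) : pr P E = 0 := by
  unfold pr; exact Finset.sum_eq_zero fun ω _ => by simp [h ω]

lemma pr_fiber {Ω A : Type} [Fintype Ω] (P : Ω → ℝ) (X : Ω → A) (E : Ω → Prop) :
    pr P E = ∑ x ∈ Finset.image X Finset.univ,
      ∑ ω ∈ Finset.univ.filter (fun ω => X ω = x), (if E ω then P ω else 0) := by
  unfold pr
  exact (Finset.sum_fiberwise_of_maps_to
    (fun ω _ => Finset.mem_image_of_mem X (Finset.mem_univ ω)) _).symm

lemma fiber_pr {Ω A : Type} [Fintype Ω] (P : Ω → ℝ) (X : Ω → A) (E : Ω → Prop) (x : A) :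
    ∑ ω ∈ Finset.univ.filter (fun ω => X ω = x), (if E ω then P ω else 0)
      = pr P (fun ω => E ω ∧ X ω = x) := by
  unfold pr
  rw [Finset.sum_filter]
  exact Finset.sum_congr rfl fun ω _ => by
    by_cases h1 : X ω = x <;> by_cases h2 : E ω <;> simp [h1, h2]

lemma eps_mul {Ω A B : Type} [Fintype Ω] (P : Ω → ℝ) (X : Ω → A) (Y : Ω → B)
    (hX : ∀ x : A, 0 < pr P (fun ω => X ω = x)) (x : A) (b : B) :
    pr P (fun ω => Y ω = b ∧ X ω = x) = eps P X Y x b * pr P (fun ω => X ω = x) := by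
  unfold eps cpr
  rw [div_mul_cancel₀ _ (ne_of_gt (hX x))]

lemma key_eps {Ω A B : Type} [Fintype Ω] (P : Ω → ℝ) (X : Ω → A) (Y : Ω → B)
    (hX : ∀ x : A, 0 < pr P (fun ω => X ω = x)) (b : B) (c : B → ℝ) :
    pr P (fun ω => Y ω = b ∧ eps P X Y (X ω) = c) =
      c b * pr P (fun ω => eps P X Y (X ω) = c) := by
  rw [pr_fiber P X, pr_fiber P X (fun ω => eps P X Y (X ω) = c), Finset.mul_sum]
  refine Finset.sum_congr rfl fun x _ => ?_
  have H : (∑ ω ∈ Finset.univ.filter (fun ω => X ω = x),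
      (if Y ω = b ∧ eps P X Y (X ω) = c then P ω else 0))
    = c b * ∑ ω ∈ Finset.univ.filter (fun ω => X ω = x),
      (if eps P X Y (X ω) = c then P ω else 0) := by
    by_cases hc : eps P X Y x = c
    · have h1 : ∑ ω ∈ Finset.univ.filter (fun ω => X ω = x),
          (if Y ω = b ∧ eps P X Y (X ω) = c then P ω else 0)
          = ∑ ω ∈ Finset.univ.filter (fun ω => X ω = x), (if Y ω = b then P ω else 0) := by
        refine Finset.sum_congr rfl fun ω hω => ?_
        have hx := (Finset.mem_filter.mp hω).2
        simp [hx, hc]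
      have h2 : ∑ ω ∈ Finset.univ.filter (fun ω => X ω = x),
          (if eps P X Y (X ω) = c then P ω else 0)
          = ∑ ω ∈ Finset.univ.filter (fun ω => X ω = x), P ω := by
        refine Finset.sum_congr rfl fun ω hω => ?_
        have hx := (Finset.mem_filter.mp hω).2
        simp [hx, hc]
      rw [h1, h2]
      have h3 : ∑ ω ∈ Finset.univ.filter (fun ω => X ω = x), (if Y ω = b then P ω else 0)
          = pr P (fun ω => Y ω = b ∧ X ω = x) := fiber_pr P X (fun ω => Y ω = b) x
      have h4 : ∑ ω ∈ Finset.univ.filter (fun ω => X ω = x), P ω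
          = pr P (fun ω => X ω = x) := by
        simp [pr, Finset.sum_filter]
      rw [h3, h4, eps_mul P X Y hX x b, hc]
    · have h1 : ∀ ω ∈ Finset.univ.filter (fun ω => X ω = x),
          (if Y ω = b ∧ eps P X Y (X ω) = c then P ω else 0) = 0 := fun ω hω => by
        have hx := (Finset.mem_filter.mp hω).2
        simp [hx, hc]
      have h2 : ∀ ω ∈ Finset.univ.filter (fun ω => X ω = x),
          (if eps P X Y (X ω) = c then P ω else 0) = 0 := fun ω hω => by
        have hx := (Finset.mem_filter.mp hω).2
        simp [hx, hc]
      rw [Finset.sum_eq_zero h1, Finset.sum_eq_zero h2, mul_zero]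
  convert H

/-- The past and the future are conditionally independent given the causal state. -/
theorem condIndep_given_causal_state {Ω A B : Type} [Fintype Ω]
    (P : Ω → ℝ) (hP : ∀ ω, 0 ≤ P ω) (hPsum : ∑ ω, P ω = 1)
    (X : Ω → A) (Y : Ω → B)
    (hX : ∀ x : A, 0 < pr P (fun ω => X ω = x)) :
    CondIndep P X Y (fun ω => eps P X Y (X ω)) := by
  intro a b c hc
  have hcne : pr P (fun ω => eps P X Y (X ω) = c) ≠ 0 := ne_of_gt hc
  by_cases ha : eps P X Y a = c
  · have e1 : pr P (fun ω => (X ω = a ∧ Y ω = b) ∧ eps P X Y (X ω) = c)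
        = pr P (fun ω => Y ω = b ∧ X ω = a) := by
      refine pr_congr P fun ω => ?_
      constructor
      · rintro ⟨⟨hxa, hyb⟩, _⟩; exact ⟨hyb, hxa⟩
      · rintro ⟨hyb, hxa⟩; exact ⟨⟨hxa, hyb⟩, by rw [hxa, ha]⟩
    have e2 : pr P (fun ω => X ω = a ∧ eps P X Y (X ω) = c)
        = pr P (fun ω => X ω = a) := by
      refine pr_congr P fun ω => ?_
      constructor
      · rintro ⟨hxa, _⟩; exact hxa
      · intro hxa; exact ⟨hxa, by rw [hxa, ha]⟩
    have e3 := key_eps P X Y hX b c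
    have e4 : pr P (fun ω => Y ω = b ∧ X ω = a) = c b * pr P (fun ω => X ω = a) := by
      rw [eps_mul P X Y hX a b, ha]
    unfold cpr
    rw [e1, e2, e3, e4]
    field_simp
  · have e1 : pr P (fun ω => (X ω = a ∧ Y ω = b) ∧ eps P X Y (X ω) = c) = 0 := by
      refine pr_zero_of_empty P fun ω => ?_
      rintro ⟨⟨hxa, _⟩, hec⟩
      exact ha (hxa ▸ hec)
    have e2 : pr P (fun ω => X ω = a ∧ eps P X Y (X ω) = c) = 0 := by
      refine pr_zero_of_empty P fun ω => ?_
      rintro ⟨hxa, hec⟩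
      exact ha (hxa ▸ hec)
    unfold cpr
    rw [e1, e2]
    simp
end

section
/- Minimality of causal states: if η is any function on the range of X such that F = η(X) is sufficient for Y (i.e., P(Y|X=x) = P(Y|F=η(x)) for all x of positive probability), then there exists a function h with ε(x) = h(η(x)) for all x of positive probability, where ε is the causal-state statistic. -/
open scoped Classical BigOperators

/-- Minimality of the causal states: the causal state is a function of any
other sufficient statistic. -/
theorem causal_states_minimal {Ω A B C : Type} [Fintype Ω]
    (P : Ω → ℝ) (hP : ∀ ω, 0 ≤ P ω) (hPsum : ∑ ω, P ω = 1)
    (X : Ω → A) (Y : Ω → B)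
    (hX : ∀ x : A, 0 < pr P (fun ω => X ω = x))
    (η : A → C)
    (hsuff : ∀ (x : A) (y : B),
      cpr P (fun ω => Y ω = y) (fun ω => X ω = x) =
        cpr P (fun ω => Y ω = y) (fun ω => η (X ω) = η x)) :
    ∃ h : C → (B → ℝ), ∀ x : A, eps P X Y x = h (η x) := by
  refine ⟨fun c => if hc : ∃ x, η x = c then eps P X Y hc.choose else 0, fun x => ?_⟩
  have hx : ∃ x' : A, η x' = η x := ⟨x, rfl⟩
  simp only [dif_pos hx]
  have he : η hx.choose = η x := hx.choose_spec
  funext y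
  show cpr P (fun ω => Y ω = y) (fun ω => X ω = x) =
    cpr P (fun ω => Y ω = y) (fun ω => X ω = hx.choose)
  rw [hsuff x y, hsuff hx.choose y, he]
end
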